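/- arXiv:1711.05620 — 2 statements merged into one kernel-verified Lean document; each statement's English description precedes it below -/
import Mathlib

section
/- Define g : [0,∞) → R by g(ξ) = ξ^{1/3}((1+√(1+ξ))^{1/3} + (1−√(1+ξ))^{1/3})·(1 − (ξ^{1/3}/2)((1+√(1+ξ))^{1/3} + (1−√(1+ξ))^{1/3})). Then g(ξ) → (2/3)² as ξ → +∞. -/
/-!
With `s = √(1 + ξ)`, `a = ∛(1 + s)` and `b = ∛(s - 1)` one has `∛ξ = ab`, `∛(1 - s) = -b` and
`a³ - b³ = 2`. Hence `h(ξ) = ab(a - b) = 2ab / (a² + ab + b²) = 2r / (r² + r + 1)` with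
`r = a / b = ∛((1 + s) / (s - 1)) → 1`, so `h → 2/3` and `g = h(1 - h/2) → (2/3)²`.
-/

open Real Filter

/-- Real cube root: `cbrt x = sign(x) |x|^{1/3}`. -/
noncomputable def cbrt (x : ℝ) : ℝ := Real.sign x * |x| ^ ((1 : ℝ)/3)

/-- `h(ξ) = ξ^{1/3}((1+√(1+ξ))^{1/3} + (1-√(1+ξ))^{1/3})` with real cube roots. -/
noncomputable def hFun (ξ : ℝ) : ℝ :=
  cbrt ξ * (cbrt (1 + Real.sqrt (1 + ξ)) + cbrt (1 - Real.sqrt (1 + ξ)))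

/-- `g(ξ) = h(ξ)(1 - h(ξ)/2)`. -/
noncomputable def gFun (ξ : ℝ) : ℝ := hFun ξ * (1 - hFun ξ / 2)

lemma cbrt_of_pos {x : ℝ} (hx : 0 < x) : cbrt x = x ^ ((1 : ℝ) / 3) := by
  rw [cbrt, Real.sign_of_pos hx, abs_of_pos hx, one_mul]

lemma cbrt_pow_three (x : ℝ) : cbrt x ^ 3 = x := by
  have h : (|x| ^ ((1 : ℝ) / 3)) ^ 3 = |x| := by
    rw [← Real.rpow_natCast, ← Real.rpow_mul (abs_nonneg x)]; norm_num
  rcases lt_trichotomy x 0 with hx | rfl | hx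
  · rw [cbrt, Real.sign_of_neg hx, neg_one_mul, neg_pow, h, abs_of_neg hx]; ring
  · simp [cbrt]
  · rw [cbrt, Real.sign_of_pos hx, one_mul, h, abs_of_pos hx]

lemma cbrt_eq_of_pow_three_eq {x y : ℝ} (h : y ^ 3 = x) : cbrt x = y :=
  (Odd.pow_inj (by decide : Odd 3)).1 (by rw [cbrt_pow_three, h])

lemma cbrt_mul (x y : ℝ) : cbrt (x * y) = cbrt x * cbrt y :=
  cbrt_eq_of_pow_three_eq (by rw [mul_pow, cbrt_pow_three, cbrt_pow_three])

lemma cbrt_div (x y : ℝ) : cbrt (x / y) = cbrt x / cbrt y :=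
  cbrt_eq_of_pow_three_eq (by rw [div_pow, cbrt_pow_three, cbrt_pow_three])

lemma cbrt_neg (x : ℝ) : cbrt (-x) = -cbrt x :=
  cbrt_eq_of_pow_three_eq (by rw [neg_pow, cbrt_pow_three]; ring)

lemma cbrt_ne_zero {x : ℝ} (hx : x ≠ 0) : cbrt x ≠ 0 := by
  intro h
  exact hx (by rw [← cbrt_pow_three x, h]; ring)

lemma continuousAt_cbrt_of_pos {x : ℝ} (hx : 0 < x) : ContinuousAt cbrt x :=
  ((Real.continuousAt_rpow_const x _ (Or.inl hx.ne')).congr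
    (eventually_gt_nhds hx |>.mono fun _ hy => (cbrt_of_pos hy).symm))

lemma mul_mul_sub_eq_of_pow_three_sub {a b : ℝ} (hb : b ≠ 0) (h : a ^ 3 - b ^ 3 = 2) :
    a * b * (a - b) = 2 * (a / b) / ((a / b) ^ 2 + a / b + 1) := by
  have hq : a ^ 2 + a * b + b ^ 2 ≠ 0 := by
    nlinarith [sq_nonneg (a + b / 2), sq_pos_of_ne_zero hb]
  rw [show 2 * (a / b) / ((a / b) ^ 2 + a / b + 1) = 2 * a * b / (a ^ 2 + a * b + b ^ 2) by
    field_simp, eq_div_iff hq]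
  linear_combination a * b * h

lemma hFun_eq_of_pos {ξ : ℝ} (hξ : 0 < ξ) :
    hFun ξ = 2 * cbrt ((1 + √(1 + ξ)) / (√(1 + ξ) - 1)) /
      (cbrt ((1 + √(1 + ξ)) / (√(1 + ξ) - 1)) ^ 2 + cbrt ((1 + √(1 + ξ)) / (√(1 + ξ) - 1)) + 1) := by
  set s := √(1 + ξ)
  have hs : 1 < s := by
    rw [Real.lt_sqrt zero_le_one]; linarith
  have hξ_eq : ξ = (1 + s) * (s - 1) := by
    linear_combination -Real.sq_sqrt (by linarith : (0 : ℝ) ≤ 1 + ξ)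
  have hb : cbrt (s - 1) ≠ 0 := cbrt_ne_zero (by linarith)
  have hcubes : cbrt (1 + s) ^ 3 - cbrt (s - 1) ^ 3 = 2 := by
    rw [cbrt_pow_three, cbrt_pow_three]; ring
  rw [cbrt_div, ← mul_mul_sub_eq_of_pow_three_sub hb hcubes, hFun,
    show 1 - s = -(s - 1) by ring, cbrt_neg, ← sub_eq_add_neg, ← cbrt_mul, ← hξ_eq]

lemma tendsto_one_add_div_sub_one_atTop :
    Tendsto (fun s : ℝ => (1 + s) / (s - 1)) atTop (nhds 1) := by
  have h : Tendsto (fun s : ℝ => 1 + 2 / (s - 1)) atTop (nhds (1 + 0)) :=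
    tendsto_const_nhds.add
      (tendsto_const_nhds.div_atTop (tendsto_atTop_add_const_right atTop (-1) tendsto_id))
  rw [add_zero] at h
  refine h.congr' ?_
  filter_upwards [eventually_gt_atTop 1] with s hs
  field_simp [sub_ne_zero.2 hs.ne']
  ring

lemma tendsto_hFun_atTop : Tendsto hFun atTop (nhds (2 / 3)) := by
  have hratio : Tendsto (fun ξ : ℝ => cbrt ((1 + √(1 + ξ)) / (√(1 + ξ) - 1))) atTop (nhds 1) := by
    have := (continuousAt_cbrt_of_pos one_pos).tendsto.comp
      (tendsto_one_add_div_sub_one_atTop.comp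
        (tendsto_sqrt_atTop.comp (tendsto_atTop_add_const_left atTop 1 tendsto_id)))
    rwa [cbrt_of_pos one_pos, Real.one_rpow] at this
  have hφ : ContinuousAt (fun t : ℝ => 2 * t / (t ^ 2 + t + 1)) 1 :=
    ContinuousAt.div (by fun_prop) (by fun_prop) (by norm_num)
  have := hφ.tendsto.comp hratio
  rw [show (2 * 1 / (1 ^ 2 + 1 + 1) : ℝ) = 2 / 3 by norm_num] at this
  refine this.congr' ?_
  filter_upwards [eventually_gt_atTop 0] with ξ hξ
  exact (hFun_eq_of_pos hξ).symm

/-- `g(ξ) → (2/3)²` as `ξ → +∞`. -/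
theorem stmt_3 : Tendsto gFun atTop (nhds ((2/3 : ℝ) ^ 2)) := by
  have h : Tendsto gFun atTop (nhds (2 / 3 * (1 - 2 / 3 / 2))) :=
    tendsto_hFun_atTop.mul (tendsto_const_nhds.sub (tendsto_hFun_atTop.div_const 2))
  convert h using 2
  norm_num
end

section
/- The function ξ ↦ ξ^{1/3}((1+√(1+ξ))^{1/3} + (1−√(1+ξ))^{1/3}) is a bounded function from [0,∞) to [0, 2/3), and it tends to 2/3 as ξ → +∞. -/
/-! With `u = cbrt (1 + s)`, `v = cbrt (1 - s)` and `s = √(1 + ξ)` we have `u³ + v³ = 2` and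
`u v = cbrt (1 - s²) = -cbrt ξ`, so Cardano's identity `(u + v)³ = u³ + v³ + 3 u v (u + v)` gives
`3 h(ξ) = 2 - (u + v)³`. Since `u + v > 0` and `h(ξ) = cbrt ξ · (u + v) ≥ 0`, this puts `h(ξ)` in
`[0, 2/3)`; and then `0 < u + v < (2/3) / cbrt ξ → 0`, so `h(ξ) → 2/3`. -/

open Real Filter

lemma cbrt_of_nonneg {x : ℝ} (hx : 0 ≤ x) : cbrt x = x ^ ((1 : ℝ) / 3) := by
  rcases hx.eq_or_lt with rfl | hpos
  · simp [cbrt]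
  · rw [cbrt, Real.sign_of_pos hpos, abs_of_pos hpos, one_mul]

lemma cbrt_nonneg {x : ℝ} (hx : 0 ≤ x) : 0 ≤ cbrt x := by
  rw [cbrt_of_nonneg hx]
  positivity

lemma pow_three_strictMono : StrictMono (fun x : ℝ => x ^ 3) :=
  Odd.strictMono_pow (by decide)

lemma cbrt_lt_cbrt {x y : ℝ} : cbrt x < cbrt y ↔ x < y := by
  rw [← pow_three_strictMono.lt_iff_lt]
  simp only [cbrt_pow_three]

lemma cbrt_add_cbrt_pos {x y : ℝ} (h : 0 < x + y) : 0 < cbrt x + cbrt y := by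
  have : cbrt (-y) < cbrt x := cbrt_lt_cbrt.2 (by linarith)
  rw [cbrt_neg] at this
  linarith

lemma tendsto_cbrt_atTop : Tendsto cbrt atTop atTop :=
  (tendsto_rpow_atTop (by norm_num)).congr' <|
    (eventually_ge_atTop 0).mono fun _ hx => (cbrt_of_nonneg hx).symm

lemma add_cbrt_pow_three (x y : ℝ) :
    (cbrt x + cbrt y) ^ 3 = x + y + 3 * cbrt (x * y) * (cbrt x + cbrt y) := by
  rw [cbrt_mul]
  linear_combination cbrt_pow_three x + cbrt_pow_three y

lemma three_mul_hFun {ξ : ℝ} (hξ : -1 ≤ ξ) :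
    3 * hFun ξ = 2 - (cbrt (1 + √(1 + ξ)) + cbrt (1 - √(1 + ξ))) ^ 3 := by
  have hprod : (1 + √(1 + ξ)) * (1 - √(1 + ξ)) = -ξ := by
    nlinarith [Real.sq_sqrt (show 0 ≤ 1 + ξ by linarith)]
  rw [add_cbrt_pow_three, hprod, cbrt_neg, hFun]
  ring

lemma cbrt_one_add_add_cbrt_one_sub_pos (t : ℝ) : 0 < cbrt (1 + t) + cbrt (1 - t) :=
  cbrt_add_cbrt_pos (by linarith)

lemma hFun_mem_Ico {ξ : ℝ} (hξ : 0 ≤ ξ) : hFun ξ ∈ Set.Ico (0 : ℝ) (2 / 3) := by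
  have hpos := cbrt_one_add_add_cbrt_one_sub_pos √(1 + ξ)
  have := three_mul_hFun (show -1 ≤ ξ by linarith)
  exact ⟨mul_nonneg (cbrt_nonneg hξ) hpos.le, by nlinarith [pow_pos hpos 3]⟩

/-- `h` maps `[0,∞)` into `[0, 2/3)` and tends to `2/3` at `+∞`. -/
theorem stmt_7 :
    (∀ ξ : ℝ, 0 ≤ ξ → hFun ξ ∈ Set.Ico (0 : ℝ) (2/3))
    ∧ Tendsto hFun atTop (nhds (2/3)) :=
  ⟨fun _ => hFun_mem_Ico, tendsto_hFun_atTop⟩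
end
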